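/- arXiv:1809.10538 — 3 statements merged into one kernel-verified Lean document; each statement's English description precedes it below -/
import Mathlib

section
/- Let $\hat{\Sigma}$ and $\Sigma$ be $p\times p$ real positive definite matrices and $\hat{\Gamma}, \Gamma \in \mathbb{R}^p$. Define $\hat{\beta} = \hat{\Sigma}^{-1}\hat{\Gamma}$, $\beta = \Sigma^{-1}\Gamma$, $\Lambda = \lambda_{\min}(\Sigma)$, and $\mathcal{D} = \|\hat{\Sigma} - \Sigma\|_{op}$. If $\mathcal{D} \le \Lambda/2$, then $\tfrac{1}{2}\|\Sigma^{-1}(\hat{\Gamma} - \hat{\Sigma}\beta)\|_2 \le \|\hat{\beta} - \beta\|_2 \le 2\|\Sigma^{-1}(\hat{\Gamma} - \hat{\Sigma}\beta)\|_2$. -/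
/-!
With `δ = β̂ - β` and `v = Σ⁻¹(Γ̂ - Σ̂β)` one has `Σ̂δ = Γ̂ - Σ̂β`, hence the perturbation identity
`v - δ = Σ⁻¹(Σ̂ - Σ)δ`. Since `Λ‖x‖² ≤ ⟪x, Σx⟫ ≤ ‖x‖‖Σx‖`, the operator `Σ⁻¹` has norm at most `1/Λ`,
so `‖v - δ‖ ≤ (𝒟/Λ)‖δ‖ ≤ ‖δ‖/2`, and the triangle inequality gives both bounds.
-/

open scoped RealInnerProductSpace

section Normed

variable {𝕜 E F : Type*} [NontriviallyNormedField 𝕜]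

lemma half_mul_norm_le_and_norm_le_two_mul_of_norm_sub_le [SeminormedAddCommGroup E] {v δ : E}
    (h : ‖v - δ‖ ≤ ‖δ‖ / 2) : 1 / 2 * ‖v‖ ≤ ‖δ‖ ∧ ‖δ‖ ≤ 2 * ‖v‖ := by
  have hv : ‖v‖ ≤ ‖v - δ‖ + ‖δ‖ := norm_le_norm_sub_add v δ
  have hδ : ‖δ‖ ≤ ‖v - δ‖ + ‖v‖ := by
    simpa [norm_sub_rev] using norm_le_norm_sub_add δ v
  constructor <;> linarith

lemma ContinuousLinearMap.apply_sub_sub_eq_apply_perturbation [SeminormedAddCommGroup E]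
    [NormedSpace 𝕜 E] {A B S : E →L[𝕜] E} (hS : S ∘L A = 1) (x y : E) :
    S (B x - B y) - (x - y) = S ((B - A) (x - y)) := by
  have hSA : S (A (x - y)) = x - y := by simpa using congrArg (· (x - y)) hS
  rw [sub_apply, map_sub S (B (x - y)), hSA, map_sub B]

lemma ContinuousLinearMap.mul_norm_le_of_mul_norm_sq_le_inner [NormedAddCommGroup E]
    [InnerProductSpace ℝ E] {T : E →L[ℝ] E} {c : ℝ} (hT : ∀ x, c * ‖x‖ ^ 2 ≤ ⟪x, T x⟫) (x : E) :
    c * ‖x‖ ≤ ‖T x‖ := by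
  rcases (norm_nonneg x).eq_or_lt with hx | hx
  · rw [← hx, mul_zero]
    exact norm_nonneg _
  · have hcs : c * ‖x‖ * ‖x‖ ≤ ‖T x‖ * ‖x‖ := by
      nlinarith [hT x, real_inner_le_norm x (T x)]
    exact le_of_mul_le_mul_right hcs hx

lemma ContinuousLinearMap.mul_norm_rightInverse_apply_le [NormedAddCommGroup E]
    [InnerProductSpace ℝ E] {T S : E →L[ℝ] E} {c : ℝ} (hT : ∀ x, c * ‖x‖ ^ 2 ≤ ⟪x, T x⟫)
    (hTS : T ∘L S = 1) (u : E) : c * ‖S u‖ ≤ ‖u‖ := by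
  have hTSu : T (S u) = u := by simpa using congrArg (· u) hTS
  simpa [hTSu] using T.mul_norm_le_of_mul_norm_sq_le_inner hT (S u)

lemma ContinuousLinearMap.norm_apply_apply_le_half [SeminormedAddCommGroup E] [NormedSpace 𝕜 E]
    [NormedAddCommGroup F] [NormedSpace 𝕜 F] {S : F →L[𝕜] E} {D : E →L[𝕜] F} {c : ℝ}
    (hS : ∀ u, c * ‖S u‖ ≤ ‖u‖) (hD : ‖D‖ ≤ c / 2) (x : E) :
    ‖S (D x)‖ ≤ ‖x‖ / 2 := by
  have hDx : ‖D x‖ ≤ c / 2 * ‖x‖ :=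
    (D.le_opNorm x).trans (mul_le_mul_of_nonneg_right hD (norm_nonneg x))
  rcases (show 0 ≤ c by linarith [norm_nonneg D]).eq_or_lt with rfl | hc
  · have : D x = 0 := norm_le_zero_iff.mp (by simpa using hDx)
    simp only [this, map_zero, norm_zero]
    positivity
  · have : c * ‖S (D x)‖ ≤ c * (‖x‖ / 2) := by linarith [hS (D x)]
    exact le_of_mul_le_mul_left this hc

end Normed

theorem stmt_0_general (p : ℕ)
    (Sig SigHat SigInv SigHatInv :
      EuclideanSpace ℝ (Fin p) →L[ℝ] EuclideanSpace ℝ (Fin p))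
    (Γhat βhat β : EuclideanSpace ℝ (Fin p)) (Λ 𝒟 : ℝ)
    -- inverses
    (hInv1 : Sig ∘L SigInv = 1) (hInv2 : SigInv ∘L Sig = 1)
    (hInv3 : SigHat ∘L SigHatInv = 1)
    -- Λ is the smallest eigenvalue of Σ (greatest lower Rayleigh bound)
    (hΛ : IsGreatest {c : ℝ | ∀ x, c * ‖x‖ ^ 2 ≤ ⟪x, Sig x⟫} Λ)
    -- 𝒟 is the operator norm of Σ̂ - Σ
    (h𝒟 : 𝒟 = ‖SigHat - Sig‖)
    -- the estimator and the target
    (hβhat : βhat = SigHatInv Γhat)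
    (hcond : 𝒟 ≤ Λ / 2) :
    (1 / 2 : ℝ) * ‖SigInv (Γhat - SigHat β)‖ ≤ ‖βhat - β‖ ∧
      ‖βhat - β‖ ≤ 2 * ‖SigInv (Γhat - SigHat β)‖ := by
  have hΓhat : SigHat βhat = Γhat := by simpa [hβhat] using congrArg (· Γhat) hInv3
  have hperturb : SigInv (Γhat - SigHat β) - (βhat - β) = SigInv ((SigHat - Sig) (βhat - β)) := by
    rw [← hΓhat]
    exact ContinuousLinearMap.apply_sub_sub_eq_apply_perturbation hInv2 βhat β
  have hSigInv : ∀ u, Λ * ‖SigInv u‖ ≤ ‖u‖ :=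
    ContinuousLinearMap.mul_norm_rightInverse_apply_le hΛ.1 hInv1
  apply half_mul_norm_le_and_norm_le_two_mul_of_norm_sub_le
  rw [hperturb]
  exact ContinuousLinearMap.norm_apply_apply_le_half hSigInv (h𝒟 ▸ hcond) _

/-- deterministic OLS sandwich inequality:
if `‖Σ̂ - Σ‖_op ≤ λ_min(Σ)/2` then
`(1/2)‖Σ⁻¹(Γ̂ - Σ̂β)‖ ≤ ‖β̂ - β‖ ≤ 2‖Σ⁻¹(Γ̂ - Σ̂β)‖`. -/
theorem stmt_0 (p : ℕ)
    (Sig SigHat SigInv SigHatInv :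
      EuclideanSpace ℝ (Fin p) →L[ℝ] EuclideanSpace ℝ (Fin p))
    (Γ Γhat βhat β : EuclideanSpace ℝ (Fin p)) (Λ 𝒟 : ℝ)
    -- Σ and Σ̂ are symmetric positive definite
    (hSigSymm : ∀ x y, ⟪Sig x, y⟫ = ⟪x, Sig y⟫)
    (hSigPos : ∀ x, x ≠ 0 → 0 < ⟪x, Sig x⟫)
    (hSigHatSymm : ∀ x y, ⟪SigHat x, y⟫ = ⟪x, SigHat y⟫)
    (hSigHatPos : ∀ x, x ≠ 0 → 0 < ⟪x, SigHat x⟫)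
    -- inverses
    (hInv1 : Sig ∘L SigInv = 1) (hInv2 : SigInv ∘L Sig = 1)
    (hInv3 : SigHat ∘L SigHatInv = 1) (hInv4 : SigHatInv ∘L SigHat = 1)
    -- Λ is the smallest eigenvalue of Σ (greatest lower Rayleigh bound)
    (hΛ : IsGreatest {c : ℝ | ∀ x, c * ‖x‖ ^ 2 ≤ ⟪x, Sig x⟫} Λ)
    -- 𝒟 is the operator norm of Σ̂ - Σ
    (h𝒟 : 𝒟 = ‖SigHat - Sig‖)
    -- the estimator and the target
    (hβhat : βhat = SigHatInv Γhat) (hβ : β = SigInv Γ)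
    (hcond : 𝒟 ≤ Λ / 2) :
    (1 / 2 : ℝ) * ‖SigInv (Γhat - SigHat β)‖ ≤ ‖βhat - β‖ ∧
      ‖βhat - β‖ ≤ 2 * ‖SigInv (Γhat - SigHat β)‖ :=
  stmt_0_general p Sig SigHat SigInv SigHatInv Γhat βhat β Λ 𝒟 hInv1 hInv2 hInv3 hΛ h𝒟 hβhat hcond
end

section
/- Let $\hat{\Sigma}$ and $\Sigma$ be $p\times p$ real positive definite matrices and $\hat{\Gamma}, \Gamma \in \mathbb{R}^p$. Define $\hat{\beta} = \hat{\Sigma}^{-1}\hat{\Gamma}$, $\beta = \Sigma^{-1}\Gamma$, $\Lambda = \lambda_{\min}(\Sigma)$, and $\mathcal{D} = \|\hat{\Sigma} - \Sigma\|_{op}$. If $\mathcal{D} \le \Lambda/2$, then $\|\hat{\beta} - \beta - \Sigma^{-1}(\hat{\Gamma} - \hat{\Sigma}\beta)\|_2 \le \tfrac{2\mathcal{D}}{\Lambda}\,\|\Sigma^{-1}(\hat{\Gamma} - \hat{\Sigma}\beta)\|_2$. -/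
open scoped RealInnerProductSpace

/-! Write `r = Σ⁻¹(Γ̂ - Σ̂β)`. Since `Σ̂β̂ = Γ̂` and `Σr = Γ̂ - Σ̂β`, the error `v = β̂ - β - r` solves
`Σ̂v = (Σ - Σ̂)r`, so `‖Σ̂v‖ ≤ 𝒟‖r‖`. On the other hand `Σ̂` is a perturbation of `Σ` of size `𝒟 ≤ Λ/2`,
so `⟪x, Σ̂x⟫ ≥ (Λ/2)‖x‖²`, whence `‖Σ̂v‖ ≥ (Λ/2)‖v‖`. -/

section Coercive

variable {E : Type*} [NormedAddCommGroup E] [InnerProductSpace ℝ E]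

theorem mul_norm_le_norm_apply_of_coercive {T : E →L[ℝ] E} {c : ℝ}
    (hT : ∀ x, c * ‖x‖ ^ 2 ≤ ⟪x, T x⟫) (x : E) : c * ‖x‖ ≤ ‖T x‖ := by
  rcases (norm_nonneg x).eq_or_lt with hx | hx
  · rw [← hx, mul_zero]
    exact norm_nonneg _
  · refine le_of_mul_le_mul_left ?_ hx
    calc ‖x‖ * (c * ‖x‖) = c * ‖x‖ ^ 2 := by ring
      _ ≤ ⟪x, T x⟫ := hT x
      _ ≤ ‖x‖ * ‖T x‖ := real_inner_le_norm _ _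

theorem coercive_of_norm_sub_le {A B : E →L[ℝ] E} {c d : ℝ}
    (hA : ∀ x, c * ‖x‖ ^ 2 ≤ ⟪x, A x⟫) (hBA : ‖B - A‖ ≤ d) (x : E) :
    (c - d) * ‖x‖ ^ 2 ≤ ⟪x, B x⟫ := by
  have hpert : |⟪x, (B - A) x⟫| ≤ d * ‖x‖ ^ 2 :=
    calc |⟪x, (B - A) x⟫| ≤ ‖x‖ * ‖(B - A) x‖ := abs_real_inner_le_norm _ _
      _ ≤ ‖x‖ * (d * ‖x‖) := by gcongr; exact (B - A).le_of_opNorm_le hBA x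
      _ = d * ‖x‖ ^ 2 := by ring
  have hsplit : ⟪x, B x⟫ = ⟪x, A x⟫ + ⟪x, (B - A) x⟫ := by
    rw [sub_apply, inner_sub_right]
    ring
  linarith [hA x, neg_abs_le ⟪x, (B - A) x⟫]

end Coercive

theorem apply_sub_sub_inverse_residual_eq {R M : Type*} [Ring R] [TopologicalSpace M]
    [AddCommGroup M] [IsTopologicalAddGroup M] [Module R M] {A Ainv B : M →L[R] M} {b bhat g : M}
    (hA : A ∘L Ainv = 1) (hbhat : B bhat = g) :
    B (bhat - b - Ainv (g - B b)) = (A - B) (Ainv (g - B b)) := by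
  have hAr : A (Ainv (g - B b)) = g - B b := DFunLike.congr_fun hA _
  rw [map_sub, map_sub, hbhat, sub_apply, hAr]

theorem stmt_1_general (p : ℕ)
    (Sig SigHat SigInv SigHatInv :
      EuclideanSpace ℝ (Fin p) →L[ℝ] EuclideanSpace ℝ (Fin p))
    (Γhat βhat β : EuclideanSpace ℝ (Fin p)) (Λ 𝒟 : ℝ)
    (hInv1 : Sig ∘L SigInv = 1)
    (hInv3 : SigHat ∘L SigHatInv = 1) (hInv4 : SigHatInv ∘L SigHat = 1)
    (hΛ : IsGreatest {c : ℝ | ∀ x, c * ‖x‖ ^ 2 ≤ ⟪x, Sig x⟫} Λ)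
    (h𝒟 : 𝒟 = ‖SigHat - Sig‖)
    (hβhat : βhat = SigHatInv Γhat)
    (hcond : 𝒟 ≤ Λ / 2) :
    ‖βhat - β - SigInv (Γhat - SigHat β)‖ ≤
      2 * 𝒟 / Λ * ‖SigInv (Γhat - SigHat β)‖ := by
  set r := SigInv (Γhat - SigHat β)
  set v := βhat - β - r
  have hSv : SigHat v = (Sig - SigHat) r :=
    apply_sub_sub_inverse_residual_eq hInv1 (hβhat ▸ DFunLike.congr_fun hInv3 Γhat)
  have hSigDiff : ‖Sig - SigHat‖ = 𝒟 := by rw [h𝒟, norm_sub_rev]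
  have hcoer : ∀ x, (Λ - Λ / 2) * ‖x‖ ^ 2 ≤ ⟪x, SigHat x⟫ :=
    coercive_of_norm_sub_le hΛ.1 (h𝒟 ▸ hcond)
  have key : (Λ - Λ / 2) * ‖v‖ ≤ 𝒟 * ‖r‖ :=
    calc (Λ - Λ / 2) * ‖v‖ ≤ ‖SigHat v‖ := mul_norm_le_norm_apply_of_coercive hcoer v
      _ = ‖(Sig - SigHat) r‖ := by rw [hSv]
      _ ≤ 𝒟 * ‖r‖ := hSigDiff ▸ (Sig - SigHat).le_opNorm r
  have h𝒟0 : 0 ≤ 𝒟 := h𝒟 ▸ norm_nonneg _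
  rcases (show 0 ≤ Λ by linarith).eq_or_lt with hΛ0 | hΛ0
  · -- `Λ = 0` forces `Σ̂ = Σ`, and then `v = 0` because `Σ̂` is injective.
    have hSig : Sig - SigHat = 0 := norm_eq_zero.mp (by linarith)
    have hv : v = 0 := by
      have hinj : SigHatInv (SigHat v) = v := DFunLike.congr_fun hInv4 v
      rw [← hinj, hSv, hSig, zero_apply, map_zero]
    rw [hv, norm_zero, ← hΛ0, div_zero, zero_mul]
  · rw [div_mul_eq_mul_div, le_div_iff₀ hΛ0]
    linarith

/-- deterministic linear-approximation inequality:
if `‖Σ̂ - Σ‖_op ≤ λ_min(Σ)/2` then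
`‖β̂ - β - Σ⁻¹(Γ̂ - Σ̂β)‖ ≤ (2𝒟/Λ)‖Σ⁻¹(Γ̂ - Σ̂β)‖`. -/
theorem stmt_1 (p : ℕ)
    (Sig SigHat SigInv SigHatInv :
      EuclideanSpace ℝ (Fin p) →L[ℝ] EuclideanSpace ℝ (Fin p))
    (Γ Γhat βhat β : EuclideanSpace ℝ (Fin p)) (Λ 𝒟 : ℝ)
    (hSigSymm : ∀ x y, ⟪Sig x, y⟫ = ⟪x, Sig y⟫)
    (hSigPos : ∀ x, x ≠ 0 → 0 < ⟪x, Sig x⟫)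
    (hSigHatSymm : ∀ x y, ⟪SigHat x, y⟫ = ⟪x, SigHat y⟫)
    (hSigHatPos : ∀ x, x ≠ 0 → 0 < ⟪x, SigHat x⟫)
    (hInv1 : Sig ∘L SigInv = 1) (hInv2 : SigInv ∘L Sig = 1)
    (hInv3 : SigHat ∘L SigHatInv = 1) (hInv4 : SigHatInv ∘L SigHat = 1)
    (hΛ : IsGreatest {c : ℝ | ∀ x, c * ‖x‖ ^ 2 ≤ ⟪x, Sig x⟫} Λ)
    (h𝒟 : 𝒟 = ‖SigHat - Sig‖)
    (hβhat : βhat = SigHatInv Γhat) (hβ : β = SigInv Γ)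
    (hcond : 𝒟 ≤ Λ / 2) :
    ‖βhat - β - SigInv (Γhat - SigHat β)‖ ≤
      2 * 𝒟 / Λ * ‖SigInv (Γhat - SigHat β)‖ :=
  stmt_1_general p Sig SigHat SigInv SigHatInv Γhat βhat β Λ 𝒟 hInv1 hInv3 hInv4 hΛ h𝒟 hβhat hcond
end

section
/- Suppose for each $n$, $W_1, \ldots, W_n$ are independent real random variables with means $\mu_i$ and variances $\sigma_i^2$, and let $\eta_n^2 = \frac{1}{n}\sum_{i=1}^n \sigma_i^2$. Then there does not exist a sequence of measurable functions $f_n: \mathbb{R}^n \to \mathbb{R}$ such that $f_n(W_1,\ldots,W_n) - \eta_n^2 \to 0$ in probability for every choice of the sequence of distributions of the $W_i$ (with arbitrary means and variances). -/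
open MeasureTheory Filter ProbabilityTheory unitInterval
open scoped ENNReal

/-!
If every `Wᵢ` is the point mass at `0`, then `ηₙ² = 0`, so a consistent estimator must have
`fₙ 0 → 0`. Now let `Wᵢ` equal `aᵢ` with probability `pᵢ = 2^-(i+2)` and `0` otherwise, with
`aᵢ = (pᵢ (1 - pᵢ))^(-1/2)` so that every variance is `1` and `ηₙ² = 1`. By the union bound all
`Wᵢ` vanish simultaneously with probability at least `1 - ∑ pᵢ ≥ 1/2`, and on that event the
estimate `fₙ 0 ≈ 0` is far from `1`, so the estimator cannot be consistent for both sequences.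
-/

lemma MeasureTheory.Measure.pi_compl_singleton_le_sum {ι : Type*} [Fintype ι] {α : ι → Type*}
    [∀ i, MeasurableSpace (α i)] [∀ i, MeasurableSingletonClass (α i)]
    (μ : ∀ i, Measure (α i)) [∀ i, IsProbabilityMeasure (μ i)] (x : ∀ i, α i) :
    Measure.pi μ {x}ᶜ ≤ ∑ i, μ i {x i}ᶜ := by
  have h_union : ({x}ᶜ : Set (∀ i, α i)) = ⋃ i, Function.eval i ⁻¹' {x i}ᶜ := by
    ext w; simp [funext_iff]
  rw [h_union]
  refine (measure_iUnion_fintype_le _ _).trans (Finset.sum_le_sum fun i _ => ?_)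
  exact ((measurePreserving_eval μ i).measure_preimage
    (measurableSet_singleton (x i)).compl.nullMeasurableSet).le

lemma bernoulliMeasure_compl_singleton_le {X : Type*} [MeasurableSpace X]
    [MeasurableSingletonClass X] (x y : X) (p : I) :
    Ber(x, y, p) {y}ᶜ ≤ toNNReal p := by
  by_cases hxy : x = y
  · simp [hxy]
  · simp [hxy, (measurableSet_singleton y).compl]

lemma integral_sq_sub_sq_integral_bernoulliMeasure (x y : ℝ) (p : I) :
    (∫ z, z ^ 2 ∂Ber(x, y, p)) - (∫ z, z ∂Ber(x, y, p)) ^ 2 = p * (1 - p) * (x - y) ^ 2 := by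
  simp only [integral_bernoulliMeasure, smul_eq_mul]
  ring

noncomputable def unitVarianceBernoulli (p : I) : Measure ℝ :=
  Ber((√(p * (1 - p)))⁻¹, 0, p)

instance (p : I) : IsProbabilityMeasure (unitVarianceBernoulli p) := by
  unfold unitVarianceBernoulli; infer_instance

lemma integral_sq_sub_sq_integral_unitVarianceBernoulli {p : I} (hp0 : 0 < (p : ℝ))
    (hp1 : (p : ℝ) < 1) :
    (∫ z, z ^ 2 ∂unitVarianceBernoulli p) - (∫ z, z ∂unitVarianceBernoulli p) ^ 2 = 1 := by
  have hpos : 0 < (p : ℝ) * (1 - p) := mul_pos hp0 (sub_pos.2 hp1)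
  rw [unitVarianceBernoulli, integral_sq_sub_sq_integral_bernoulliMeasure, sub_zero, inv_pow,
    Real.sq_sqrt hpos.le, mul_inv_cancel₀ hpos.ne']

noncomputable def atomMass (i : ℕ) : I :=
  ⟨2⁻¹ ^ (i + 2), by positivity, pow_le_one₀ (by norm_num) (by norm_num)⟩

lemma sum_atomMass_le (n : ℕ) : ∑ i : Fin n, (toNNReal (atomMass i) : ℝ≥0∞) ≤ 2⁻¹ := by
  have h_coe (i : ℕ) : (toNNReal (atomMass i) : ℝ≥0∞) = 2⁻¹ ^ 2 * 2⁻¹ ^ i := by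
    have h_nnreal : toNNReal (atomMass i) = 2⁻¹ ^ (i + 2) := NNReal.eq (by simp [atomMass])
    rw [h_nnreal, ← pow_add, add_comm]
    simp [ENNReal.inv_pow]
  calc ∑ i : Fin n, (toNNReal (atomMass i) : ℝ≥0∞)
      ≤ ∑' i : ℕ, (toNNReal (atomMass i) : ℝ≥0∞) := by
        rw [Fin.sum_univ_eq_sum_range (fun i => (toNNReal (atomMass i) : ℝ≥0∞))]
        exact ENNReal.sum_le_tsum _
    _ = 2⁻¹ := by
        simp only [h_coe, ENNReal.tsum_mul_left, ENNReal.tsum_geometric, ENNReal.one_sub_inv_two,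
          inv_inv, pow_two, mul_assoc]
        rw [ENNReal.inv_mul_cancel (by norm_num) (by norm_num), mul_one]

lemma half_le_pi_unitVarianceBernoulli_atomMass (n : ℕ) :
    2⁻¹ ≤ Measure.pi (fun i : Fin n => unitVarianceBernoulli (atomMass i)) {0} := by
  rw [← compl_compl ({0} : Set (Fin n → ℝ)),
    prob_compl_eq_one_sub (measurableSet_singleton _).compl, ← ENNReal.one_sub_inv_two]
  gcongr
  calc Measure.pi (fun i : Fin n => unitVarianceBernoulli (atomMass i)) {0}ᶜ
      ≤ ∑ i : Fin n, unitVarianceBernoulli (atomMass i) {0}ᶜ :=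
        Measure.pi_compl_singleton_le_sum _ 0
    _ ≤ ∑ i : Fin n, (toNNReal (atomMass i) : ℝ≥0∞) :=
        Finset.sum_le_sum fun i _ => bernoulliMeasure_compl_singleton_le _ _ _
    _ ≤ 2⁻¹ := sum_atomMass_le n

lemma eventually_abs_sub_lt_of_tendsto_measure {α : ℕ → Type*} [∀ n, MeasurableSpace (α n)]
    {P : ∀ n, Measure (α n)} {x : ∀ n, α n} {c : ℝ≥0∞} (hc : 0 < c) (hP : ∀ n, c ≤ P n {x n})
    {g : ∀ n, α n → ℝ} {t : ℕ → ℝ} {ε : ℝ}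
    (h : Tendsto (fun n => P n {w | ε ≤ |g n w - t n|}) atTop (nhds 0)) :
    ∀ᶠ n in atTop, |g n (x n) - t n| < ε := by
  filter_upwards [h.eventually_lt_const hc] with n hn
  by_contra hx
  exact (hn.trans_le ((hP n).trans (measure_mono (by simpa using hx)))).false

noncomputable def avgVariance (μ : ℕ → Measure ℝ) (n : ℕ) : ℝ :=
  (n : ℝ)⁻¹ * ∑ i : Fin n, ((∫ x, x ^ 2 ∂μ i) - (∫ x, x ∂μ i) ^ 2)

lemma avgVariance_eq {μ : ℕ → Measure ℝ} {c : ℝ}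
    (hμ : ∀ i, (∫ x, x ^ 2 ∂μ i) - (∫ x, x ∂μ i) ^ 2 = c) {n : ℕ} (hn : n ≠ 0) :
    avgVariance μ n = c := by
  simp [avgVariance, hμ, hn]

/-- there is no sequence of measurable functions `fₙ : ℝⁿ → ℝ`
that consistently estimates the average variance
`ηₙ² = (1/n)∑ᵢ σᵢ²` of independent random variables `W₁,…,Wₙ`, uniformly over
all choices of the marginal distributions (with finite means and variances).
Convergence in probability is with respect to the product of the marginals. -/
theorem stmt_4 :
    ¬ ∃ f : (n : ℕ) → (Fin n → ℝ) → ℝ,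
      (∀ n, Measurable (f n)) ∧
      ∀ μseq : ℕ → Measure ℝ,
        (∀ i, IsProbabilityMeasure (μseq i)) →
        (∀ i, Integrable (fun x => x) (μseq i)) →
        (∀ i, Integrable (fun x => x ^ 2) (μseq i)) →
        ∀ ε > 0,
          Tendsto (fun n =>
              (Measure.pi fun i : Fin n => μseq i)
                {w | ε ≤ |f n w -
                  (n : ℝ)⁻¹ * ∑ i : Fin n,
                    ((∫ x, x ^ 2 ∂μseq i) - (∫ x, x ∂μseq i) ^ 2)|})
            atTop (nhds 0) := by
  rintro ⟨f, -, hf⟩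
  have h_dirac : ∀ᶠ n in atTop, |f n 0 - avgVariance (fun _ => Measure.dirac 0) n| < 4⁻¹ :=
    eventually_abs_sub_lt_of_tendsto_measure (x := fun _ => 0) one_pos (fun n => by simp)
      (hf (fun _ => Measure.dirac 0) (fun _ => inferInstance)
        (fun _ => integrable_dirac (by simp)) (fun _ => integrable_dirac (by simp)) _
        (by norm_num))
  have h_spiked : ∀ᶠ n in atTop,
      |f n 0 - avgVariance (fun i => unitVarianceBernoulli (atomMass i)) n| < 4⁻¹ :=
    eventually_abs_sub_lt_of_tendsto_measure (x := fun _ => 0) (by norm_num)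
      half_le_pi_unitVarianceBernoulli_atomMass
      (hf (fun i => unitVarianceBernoulli (atomMass i)) (fun _ => inferInstance)
        (fun _ => integrable_bernoulliMeasure ..) (fun _ => integrable_bernoulliMeasure ..) _
        (by norm_num))
  obtain ⟨n, hn, h0, h1⟩ := ((eventually_ne_atTop 0).and (h_dirac.and h_spiked)).exists
  rw [avgVariance_eq (c := 0) (fun _ => by simp) hn] at h0
  rw [avgVariance_eq (c := 1) (fun i => integral_sq_sub_sq_integral_unitVarianceBernoulli
    (pow_pos (by norm_num) _) (pow_lt_one₀ (by norm_num) (by norm_num) (by omega))) hn] at h1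
  rw [abs_lt] at h0 h1
  linarith [h0.2, h1.1]
end
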